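/- If every variable with fractional value ≥ 1/2 is rounded up to 1 and the fractional optimum of the LP relaxation is k*, then the rounded solution (when feasible) stabs each maximal segment at most 2(k* − 1) + 1 ≤ 2k* − 1 times, giving a 2-approximation of the integer optimum; hence failure of the 2-approximation argument can only arise from infeasibility of the rounded solution, not from the stabbing bound. -/
import Mathlib


/-- Threshold rounding: `x ↦ 1` if `x ≥ 1/2`, else `0`. -/
noncomputable def roundGE (x : ℝ) : ℝ := if x ≥ 1/2 then 1 else 0

/-- If every variable with fractional value `≥ 1/2` is
rounded up to `1` and the fractional LP optimum is `k*`, then along any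
maximal segment `s` (with edge set `S` and fractional stabbing constraint
`∑ e ∈ S, x e ≤ k* - 1`) the rounded solution stabs `s` at most
`2(k* − 1) + 1 ≤ 2k* − 1` times; since `k*` is a lower bound on the integer
optimum `OPT`, this is a 2-approximation: `2k* − 1 ≤ 2 · OPT`. -/
theorem rounded_stabbing_two_approx {E : Type*} (S : Finset E) (x : E → ℝ)
    (kstar OPT : ℝ)
    (hx : ∀ e, 0 ≤ x e ∧ x e ≤ 1)
    (hstab : ∑ e ∈ S, x e ≤ kstar - 1)
    (hk : 1 ≤ kstar) (hlb : kstar ≤ OPT) :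
    1 + ∑ e ∈ S, roundGE (x e) ≤ 2 * (kstar - 1) + 1 ∧
    2 * (kstar - 1) + 1 ≤ 2 * kstar - 1 ∧
    2 * kstar - 1 ≤ 2 * OPT := by
  refine ⟨?_, by ring_nf; linarith, by linarith⟩
  have h : ∑ e ∈ S, roundGE (x e) ≤ ∑ e ∈ S, 2 * x e := by
    apply Finset.sum_le_sum
    intro e _
    unfold roundGE
    split
    · linarith
    · have := (hx e).1; linarith
  rw [← Finset.mul_sum] at h
  linarith
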